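/- Let d ≥ 3 and let Λ be a random sequence in the unit ball 𝔹_d ⊂ ℂ^d. If ∑_{m=0}^∞ N_m 2^{−m} = ∞, then almost surely Λ is not uniformly separated (ℙ(𝒰(𝔹_d)) = 0). -/

import Mathlib

open MeasureTheory ProbabilityTheory ENNReal

noncomputable section

/-- We endow `EuclideanSpace ℂ (Fin d)` with its Borel `σ`-algebra. -/
instance (d : ℕ) : MeasurableSpace (EuclideanSpace ℂ (Fin d)) := borel _

instance (d : ℕ) : BorelSpace (EuclideanSpace ℂ (Fin d)) := ⟨rfl⟩

/-- The pseudo-hyperbolic distance `ρ(z,w) = |φ_z(w)|` on the unit ball `𝔹_d ⊂ ℂ^d`, defined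
via the identity `1 - ρ(z,w)² = (1-|z|²)(1-|w|²)/|1-⟨w,z⟩|²`. -/
def ballRho {d : ℕ} (z w : EuclideanSpace ℂ (Fin d)) : ℝ :=
  Real.sqrt (1 - (1 - ‖z‖ ^ 2) * (1 - ‖w‖ ^ 2) / ‖1 - @inner ℂ _ _ w z‖ ^ 2)

/-- A random sequence `λ_j = ρ_j ξ_j` in the unit ball `𝔹_d ⊂ ℂ^d`: deterministic radii
`ρ_j ∈ [0,1)` and an independent sequence `(ξ_j)` of random variables uniformly distributed
on the unit sphere.  Uniformity is expressed by invariance of the distribution of each `ξ_j`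
under every unitary transformation, which uniquely characterizes the normalized surface
measure among probability distributions supported on the sphere. -/
structure RandomBallSeq (d : ℕ) (Ω : Type*) [MeasurableSpace Ω]
    (P : MeasureTheory.Measure Ω) where
  rad : ℕ → ℝ
  rad_mem : ∀ j, rad j ∈ Set.Ico (0 : ℝ) 1
  ξ : ℕ → Ω → EuclideanSpace ℂ (Fin d)
  ξ_meas : ∀ j, Measurable (ξ j)
  ξ_sphere : ∀ j ω, ‖ξ j ω‖ = 1
  ξ_indep : iIndepFun ξ P
  ξ_unif : ∀ (j : ℕ) (U : EuclideanSpace ℂ (Fin d) ≃ₗᵢ[ℂ] EuclideanSpace ℂ (Fin d)),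
      MeasureTheory.Measure.map (fun ω => U (ξ j ω)) P = MeasureTheory.Measure.map (ξ j) P

namespace RandomBallSeq

variable {d : ℕ} {Ω : Type*} [MeasurableSpace Ω] {P : MeasureTheory.Measure Ω}

/-- The random point `λ_j(ω) = ρ_j ξ_j(ω) ∈ 𝔹_d`. -/
def pt (Λ : RandomBallSeq d Ω P) (j : ℕ) (ω : Ω) : EuclideanSpace ℂ (Fin d) :=
  Λ.rad j • Λ.ξ j ω

/-- `N_m = #{j : m (ln 2)/2 ≤ β(0, λ_j) < (m+1)(ln 2)/2}` where
`β(0,z) = (1/2) log((1+|z|)/(1-|z|))` is the Bergman distance from the origin; since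
`|λ_j| = ρ_j`, this is deterministic. -/
def N (Λ : RandomBallSeq d Ω P) (m : ℕ) : ℝ≥0∞ :=
  ({j : ℕ |
      (m : ℝ) * Real.log 2 / 2 ≤ (1 / 2) * Real.log ((1 + Λ.rad j) / (1 - Λ.rad j)) ∧
      (1 / 2) * Real.log ((1 + Λ.rad j) / (1 - Λ.rad j)) < ((m : ℝ) + 1) * Real.log 2 / 2
    }).encard

/-- The realization `Λ(ω)` is uniformly separated: `inf_k ∏_{j ≠ k} ρ(λ_j, λ_k) > 0`.
Since the factors lie in `[0,1)`, the infinite product is the infimum of its finite partial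
products, so this is expressed via finite subproducts. -/
def UniformlySeparated (Λ : RandomBallSeq d Ω P) (ω : Ω) : Prop :=
  ∃ c > (0 : ℝ), ∀ k : ℕ, ∀ F : Finset ℕ, k ∉ F →
    c ≤ ∏ j ∈ F, ballRho (Λ.pt j ω) (Λ.pt k ω)

end RandomBallSeq

/-!
Uniform separation is incompatible with the hypothesis for every realization, not just almost
surely. Since `1 - ρ(z, w) ≥ (1 - |z|)(1 - |w|)/8`, a lower bound `c` on the products
`∏_{j ≠ 0} ρ(λ_j, λ_0)` forces `∑_j (1 - ρ_j) ≤ 8 (-log c)/(1 - ρ_0) + 1` (Blaschke condition).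
On the other hand every index counted by `N_m` has `1 - ρ_j > 2^{-m-1}`, and the shells are
disjoint, so `∑_m N_m 2^{-m} ≤ 2 ∑_j (1 - ρ_j)`.
-/

open Set Finset Function

theorem sum_le_neg_log_of_le_prod_one_sub {ι : Type*} {s : Finset ι} {a : ι → ℝ} {c : ℝ}
    (hc : 0 < c) (ha : ∀ i ∈ s, a i ≤ 1) (h : c ≤ ∏ i ∈ s, (1 - a i)) :
    ∑ i ∈ s, a i ≤ -Real.log c := by
  have hexp : ∏ i ∈ s, (1 - a i) ≤ Real.exp (-∑ i ∈ s, a i) := by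
    rw [← Finset.sum_neg_distrib, Real.exp_sum]
    exact prod_le_prod (fun i hi => sub_nonneg.2 (ha i hi)) fun i _ => Real.one_sub_le_exp_neg _
  have := Real.log_le_log hc (h.trans hexp)
  rw [Real.log_exp] at this
  linarith

theorem tsum_encard_mul_le_tsum {ι α : Type*} {S : ι → Set α} (hS : Pairwise (Disjoint on S))
    {c : ι → ℝ≥0∞} {f : α → ℝ≥0∞} (h : ∀ i, ∀ x ∈ S i, c i ≤ f x) :
    ∑' i, (S i).encard * c i ≤ ∑' x, f x :=
  calc ∑' i, (S i).encard * c i = ∑' i, ∑' _ : S i, c i := by simp only [ENNReal.tsum_set_const]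
    _ ≤ ∑' i, ∑' x : S i, f x :=
      ENNReal.tsum_le_tsum fun i => ENNReal.tsum_le_tsum fun x => h i x x.2
    _ = ∑' x : ⋃ i, S i, f x := (ENNReal.tsum_biUnion fun _ _ _ _ hij => hS hij).symm
    _ ≤ ∑' x, f x := ENNReal.tsum_comp_le_tsum_of_injective Subtype.coe_injective f

theorem ballRho_le_one_sub {d : ℕ} {z w : EuclideanSpace ℂ (Fin d)} (hz : ‖z‖ < 1)
    (hw : ‖w‖ < 1) : ballRho z w ≤ 1 - (1 - ‖z‖) * (1 - ‖w‖) / 8 := by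
  set s := ‖z‖
  set t := ‖w‖
  have hs : 0 ≤ s := norm_nonneg _
  have ht : 0 ≤ t := norm_nonneg _
  have hinner : ‖@inner ℂ _ _ w z‖ ≤ t * s := norm_inner_le_norm w z
  set D := ‖1 - @inner ℂ _ _ w z‖
  have hD_lb : 1 - t * s ≤ D := by
    have := norm_sub_norm_le (1 : ℂ) (@inner ℂ _ _ w z)
    rw [norm_one] at this
    linarith
  have hD_ub : D ≤ 2 := by
    have := norm_sub_le (1 : ℂ) (@inner ℂ _ _ w z)
    rw [norm_one] at this
    nlinarith
  have hD_pos : 0 < D := by nlinarith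
  have hst : 0 ≤ (1 - s) * (1 - t) := mul_nonneg (by linarith) (by linarith)
  have hst1 : (1 - s) * (1 - t) ≤ 1 := mul_le_one₀ (by linarith) (by linarith) (by linarith)
  have hnum : (1 - s) * (1 - t) ≤ (1 - s ^ 2) * (1 - t ^ 2) := by
    have : 0 ≤ (1 - s) * (1 - t) * (s + t + s * t) := by positivity
    linear_combination this
  have hkey : (1 - s) * (1 - t) / 4 ≤ (1 - s ^ 2) * (1 - t ^ 2) / D ^ 2 :=
    div_le_div₀ (hst.trans hnum) hnum (by positivity) (by nlinarith)
  calc Real.sqrt (1 - (1 - s ^ 2) * (1 - t ^ 2) / D ^ 2)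
      ≤ Real.sqrt (1 - (1 - s) * (1 - t) / 4) := Real.sqrt_le_sqrt (by linarith)
    _ ≤ 1 - (1 - s) * (1 - t) / 8 :=
      Real.sqrt_le_iff.2 ⟨by linarith, by nlinarith [sq_nonneg ((1 - s) * (1 - t))]⟩

theorem inv_two_pow_lt_two_mul_one_sub {r : ℝ} (hr0 : 0 ≤ r) (hr1 : r < 1) {m : ℕ}
    (h : 1 / 2 * Real.log ((1 + r) / (1 - r)) < ((m : ℝ) + 1) * Real.log 2 / 2) :
    ((2 : ℝ) ^ m)⁻¹ < 2 * (1 - r) := by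
  have hlog : Real.log ((1 + r) / (1 - r)) < Real.log (2 ^ (m + 1)) := by
    rw [Real.log_pow]
    push_cast
    linarith
  have hlt := (Real.log_lt_log_iff (by apply div_pos <;> linarith) (by positivity)).1 hlog
  rw [div_lt_iff₀ (by linarith), pow_succ] at hlt
  rw [inv_lt_iff_one_lt_mul₀ (by positivity)]
  linarith

namespace RandomBallSeq

variable {d : ℕ} {Ω : Type*} [MeasurableSpace Ω] {P : Measure Ω} (Λ : RandomBallSeq d Ω P)

theorem rad_nonneg (j : ℕ) : 0 ≤ Λ.rad j := (Λ.rad_mem j).1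

theorem rad_lt_one (j : ℕ) : Λ.rad j < 1 := (Λ.rad_mem j).2

theorem norm_pt (j : ℕ) (ω : Ω) : ‖Λ.pt j ω‖ = Λ.rad j := by
  rw [pt, norm_smul, Λ.ξ_sphere, Real.norm_of_nonneg (Λ.rad_nonneg j), mul_one]

theorem UniformlySeparated.summable_one_sub_rad {Λ : RandomBallSeq d Ω P} {ω : Ω}
    (h : Λ.UniformlySeparated ω) : Summable fun j => 1 - Λ.rad j := by
  obtain ⟨c, hc, hsep⟩ := h
  set δ := (1 - Λ.rad 0) / 8 with hδ_def
  have hδ : 0 < δ := by linarith [Λ.rad_lt_one 0]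
  have hδ1 : δ ≤ 1 := by linarith [Λ.rad_nonneg 0]
  have hfactor : ∀ j, ballRho (Λ.pt j ω) (Λ.pt 0 ω) ≤ 1 - (1 - Λ.rad j) * δ := fun j => by
    have := ballRho_le_one_sub (z := Λ.pt j ω) (w := Λ.pt 0 ω)
      (by simpa [norm_pt] using Λ.rad_lt_one j) (by simpa [norm_pt] using Λ.rad_lt_one 0)
    rwa [norm_pt, norm_pt, mul_div_assoc] at this
  have hbound : ∀ F : Finset ℕ, 0 ∉ F → ∑ j ∈ F, (1 - Λ.rad j) ≤ -Real.log c / δ := by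
    intro F hF
    rw [le_div_iff₀ hδ, sum_mul]
    refine sum_le_neg_log_of_le_prod_one_sub hc
      (fun j _ => mul_le_one₀ (by linarith [Λ.rad_nonneg j]) hδ.le hδ1) ((hsep 0 F hF).trans ?_)
    exact prod_le_prod (fun j _ => Real.sqrt_nonneg _) fun j _ => hfactor j
  refine summable_of_sum_le (c := 1 + -Real.log c / δ)
    (fun j => sub_nonneg.2 (Λ.rad_lt_one j).le) fun F => ?_
  calc ∑ j ∈ F, (1 - Λ.rad j) ≤ ∑ j ∈ insert 0 (F.erase 0), (1 - Λ.rad j) :=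
        sum_le_sum_of_subset_of_nonneg (insert_erase_subset 0 F)
          fun j _ _ => sub_nonneg.2 (Λ.rad_lt_one j).le
    _ = (1 - Λ.rad 0) + ∑ j ∈ F.erase 0, (1 - Λ.rad j) := sum_insert (F.notMem_erase 0)
    _ ≤ 1 + -Real.log c / δ := by
      linarith [Λ.rad_nonneg 0, hbound (F.erase 0) (F.notMem_erase 0)]

theorem tsum_N_mul_le :
    ∑' m : ℕ, Λ.N m * (2 : ℝ≥0∞) ^ (-(m : ℤ)) ≤ 2 * ∑' j, ENNReal.ofReal (1 - Λ.rad j) := by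
  rw [← ENNReal.tsum_mul_left]
  have hshells : Pairwise (Disjoint on
      fun m : ℕ => Ico ((m : ℝ) * Real.log 2 / 2) ((m + 1) * Real.log 2 / 2)) := by
    have hmono : Monotone fun m : ℕ => (m : ℝ) * Real.log 2 / 2 := fun m n hmn => by
      have := Real.log_pos one_lt_two
      dsimp only
      gcongr
    simpa using hmono.pairwise_disjoint_on_Ico_succ
  refine tsum_encard_mul_le_tsum (hshells.mono fun m n h => h.preimage _) fun m j hj => ?_
  have hlt := inv_two_pow_lt_two_mul_one_sub (Λ.rad_nonneg j) (Λ.rad_lt_one j) hj.2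
  rw [ENNReal.zpow_neg, zpow_natCast, ← ENNReal.ofReal_ofNat 2, ← ENNReal.ofReal_mul zero_le_two,
    ← ENNReal.ofReal_pow zero_le_two, ← ENNReal.ofReal_inv_of_pos (by positivity)]
  exact ENNReal.ofReal_le_ofReal hlt.le

end RandomBallSeq

theorem random_uniform_separation_ball_divergent_general (d : ℕ)
    (Ω : Type*) [MeasurableSpace Ω] (P : MeasureTheory.Measure Ω)
    (Λ : RandomBallSeq d Ω P)
    (hsum : ∑' m : ℕ, Λ.N m * (2 : ℝ≥0∞) ^ (-(m : ℤ)) = ⊤) :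
    P {ω | Λ.UniformlySeparated ω} = 0 := by
  suffices {ω | Λ.UniformlySeparated ω} = ∅ by rw [this, measure_empty]
  refine eq_empty_of_forall_notMem fun ω hω => ?_
  have hfin : 2 * ∑' j, ENNReal.ofReal (1 - Λ.rad j) < ⊤ :=
    ENNReal.mul_lt_top ENNReal.ofNat_lt_top hω.summable_one_sub_rad.tsum_ofReal_ne_top.lt_top
  exact (Λ.tsum_N_mul_le.trans_lt hfin).ne hsum

/-- For `d ≥ 3`: if `∑_m N_m 2^{-m} = ∞` then a random sequence in the unit
ball `𝔹_d ⊂ ℂ^d` is almost surely not uniformly separated. -/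
theorem random_uniform_separation_ball_divergent (d : ℕ) (hd : 3 ≤ d)
    (Ω : Type*) [MeasurableSpace Ω] (P : MeasureTheory.Measure Ω) [IsProbabilityMeasure P]
    (Λ : RandomBallSeq d Ω P)
    (hsum : ∑' m : ℕ, Λ.N m * (2 : ℝ≥0∞) ^ (-(m : ℤ)) = ⊤) :
    P {ω | Λ.UniformlySeparated ω} = 0 :=
  random_uniform_separation_ball_divergent_general d Ω P Λ hsum
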